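/- In the 4-candidate, 100-voter election where 52 voters rank A>B>C>D and 48 voters rank C>D>A>B, the sequential RCV winner set for 2 seats is {A,B}, while the STV winner set for 2 seats (quota floor(100/3)+1 = 34) is {A,C}. -/

import Mathlib

namespace Voting

variable {C : Type*} [DecidableEq C]

/-- A profile is a multiset of (possibly partial) preference ballots,
each ballot being a list of candidates from most- to least-preferred. -/
abbrev Profile (C : Type*) := Multiset (List C)

/-- The highest-ranked candidate on ballot `b` among the still-hopeful candidates `h`. -/
def restrictedHead (h : Finset C) (b : List C) : Option C :=
  (b.filter (fun c => decide (c ∈ h))).head?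

/-- First-place votes of `x` among hopeful candidates `h`. -/
def fpv (P : Profile C) (h : Finset C) (x : C) : ℕ :=
  Multiset.card (P.filter (fun b => restrictedHead h b = some x))

/-- Number of non-exhausted ballots (ballots ranking some hopeful candidate). -/
def active (P : Profile C) (h : Finset C) : ℕ :=
  Multiset.card (P.filter (fun b => (restrictedHead h b).isSome))

/-- `IRVwins P h w` : starting from the hopeful set `h`, instant runoff voting can
declare `w` the winner: either `w` has a strict majority of first-place votes among
non-exhausted ballots, or no candidate has such a majority, a candidate with the fewest
first-place votes is eliminated, and `w` wins the resulting election. -/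
inductive IRVwins (P : Profile C) : Finset C → C → Prop
  | maj {h : Finset C} {w : C} : w ∈ h → 2 * fpv P h w > active P h → IRVwins P h w
  | elim {h : Finset C} {l w : C} : l ∈ h →
      (∀ x ∈ h, fpv P h l ≤ fpv P h x) →
      (¬ ∃ x ∈ h, 2 * fpv P h x > active P h) →
      IRVwins P (h.erase l) w → IRVwins P h w

/-- Delete the candidates in `W` from every ballot of `P`. -/
def removeCands (W : Finset C) (P : Profile C) : Profile C :=
  P.map (fun b => b.filter (fun c => decide (c ∉ W)))

/-- `SeqRCV P S W` : sequential RCV can fill `S` seats with the winner set `W`,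
electing at each stage the IRV winner of the profile with all previous winners deleted. -/
inductive SeqRCV [Fintype C] (P : Profile C) : ℕ → Finset C → Prop
  | zero : SeqRCV P 0 ∅
  | succ {S : ℕ} {W : Finset C} {w : C} : SeqRCV P S W → w ∉ W →
      IRVwins (removeCands W P) Finset.univ w → SeqRCV P (S + 1) (insert w W)

/-- Weighted ballots for STV: each ballot carries a fractional vote weight. -/
abbrev WProfile (C : Type*) := Multiset (List C × ℚ)

/-- The (fractional) vote total of candidate `x` among hopefuls `h`. -/
def tally (h : Finset C) (B : WProfile C) (x : C) : ℚ :=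
  (B.map (fun p => if restrictedHead h p.1 = some x then p.2 else 0)).sum

/-- When `a` is elected with quota `q`, the ballots currently counting for `a` are
rescaled by `surplus / total`, effecting the proportional surplus transfer. -/
def scaleElected (h : Finset C) (B : WProfile C) (a : C) (q : ℚ) : WProfile C :=
  B.map (fun p => if restrictedHead h p.1 = some a
    then (p.1, p.2 * ((tally h B a - q) / tally h B a)) else p)

/-- `STVrun S q h B E F` : from the state with hopefuls `h`, weighted ballots `B` and
already-elected set `E`, the STV process with `S` seats and quota `q` can terminate
with elected set `F`. -/
inductive STVrun (S : ℕ) (q : ℚ) : Finset C → WProfile C → Finset C → Finset C → Prop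
  | done {h : Finset C} {B : WProfile C} {E : Finset C} :
      E.card = S → STVrun S q h B E E
  | fill {h : Finset C} {B : WProfile C} {E : Finset C} :
      E.card < S → E.card + h.card = S → STVrun S q h B E (E ∪ h)
  | elect {h : Finset C} {B : WProfile C} {E F : Finset C} {a : C} :
      E.card < S → a ∈ h → q ≤ tally h B a →
      STVrun S q (h.erase a) (scaleElected h B a q) (insert a E) F →
      STVrun S q h B E F
  | elim {h : Finset C} {B : WProfile C} {E F : Finset C} {l : C} :
      E.card < S → S < E.card + h.card → l ∈ h →
      (∀ x ∈ h, ¬ q ≤ tally h B x) →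
      (∀ x ∈ h, tally h B l ≤ tally h B x) →
      STVrun S q (h.erase l) B E F →
      STVrun S q h B E F

/-- The STV quota for `V` voters and `S` seats: `⌊V/(S+1)⌋ + 1`. -/
def quota (V S : ℕ) : ℚ := ((V / (S + 1) : ℕ) : ℚ) + 1

/-- `STVwins P S W` : single transferable vote with `S` seats can elect the winner set
`W` from the profile `P` (every ballot starting with weight 1). -/
def STVwins [Fintype C] (P : Profile C) (S : ℕ) (W : Finset C) : Prop :=
  STVrun S (quota (Multiset.card P) S) Finset.univ (P.map (fun b => (b, (1 : ℚ)))) ∅ W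

/-- Voter with ballot `b` prefers `x` to `y` (weak order model: unranked candidates
are tied for last). -/
def prefers (b : List C) (x y : C) : Prop :=
  x ∈ b ∧ (y ∉ b ∨ b.idxOf x < b.idxOf y)

instance (b : List C) (x y : C) : Decidable (prefers b x y) :=
  inferInstanceAs (Decidable (x ∈ b ∧ (y ∉ b ∨ b.idxOf x < b.idxOf y)))

/-- Number of voters preferring `x` to `y`. -/
def prefCount (P : Profile C) (x y : C) : ℕ :=
  Multiset.card (P.filter (fun b => prefers b x y))

/-- `W` is a Condorcet committee: every member beats every non-member head-to-head. -/
def CondorcetCommittee (P : Profile C) (W : Finset C) : Prop :=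
  ∀ a ∈ W, ∀ b ∉ W, prefCount P a b > prefCount P b a

/-- Number of voters none of whose top `S` ranked candidates are in `W`. -/
def misrepCount (P : Profile C) (S : ℕ) (W : Finset C) : ℕ :=
  Multiset.card (P.filter (fun b => ∀ x ∈ b.take S, x ∉ W))

/-- Number of voters all of whose top `S` ranked candidates are in `W`. -/
def maxrepCount (P : Profile C) (S : ℕ) (W : Finset C) : ℕ :=
  Multiset.card (P.filter (fun b => ∀ x ∈ b.take S, x ∈ W))

/-- Degree of misrepresentation, as a percentage. -/
def misrepDeg (P : Profile C) (S : ℕ) (W : Finset C) : ℚ :=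
  100 * (misrepCount P S W : ℚ) / (Multiset.card P : ℚ)

/-- Degree of maximal representation, as a percentage. -/
def maxrepDeg (P : Profile C) (S : ℕ) (W : Finset C) : ℚ :=
  100 * (maxrepCount P S W : ℚ) / (Multiset.card P : ℚ)

end Voting
open Voting

notation "cA" => (0 : Fin 4)
notation "cB" => (1 : Fin 4)
notation "cC" => (2 : Fin 4)
notation "cD" => (3 : Fin 4)

/-- The 100-voter profile: 52 voters rank A>B>C>D and 48 voters rank C>D>A>B. -/
def P2 : Voting.Profile (Fin 4) :=
  Multiset.replicate 52 [cA, cB, cC, cD] + Multiset.replicate 48 [cC, cD, cA, cB]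

/-- in the 100-voter election (52: A>B>C>D, 48: C>D>A>B), the sequential
RCV winner set for 2 seats is {A, B}, while the STV winner set for 2 seats
(with quota ⌊100/3⌋+1 = 34) is {A, C}. -/
theorem stmt5 :
    SeqRCV P2 2 {cA, cB} ∧
    quota 100 2 = 34 ∧ Multiset.card P2 = 100 ∧
    STVwins P2 2 {cA, cC} := by
  have hq : quota (Multiset.card P2) 2 = 34 := by
    have h100 : Multiset.card P2 = 100 := by decide
    rw [h100]; norm_num [quota]
  refine ⟨?_, by norm_num [quota], by decide, ?_⟩
  · have e : ({cA, cB} : Finset (Fin 4)) = insert cB (insert cA ∅) := by decide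
    rw [e]
    refine SeqRCV.succ (SeqRCV.succ SeqRCV.zero (by decide) ?_) (by decide) ?_
    · exact IRVwins.maj (by decide) (by decide)
    · exact IRVwins.maj (by decide) (by decide)
  · have e : ({cA, cC} : Finset (Fin 4)) = insert cC (insert cA ∅) := by decide
    unfold STVwins
    rw [e]
    refine STVrun.elect (a := cA) (by decide) (by decide) ?_ ?_
    · rw [hq]
      simp only [P2, tally, Multiset.map_add, Multiset.map_replicate, Multiset.sum_add,
        Multiset.sum_replicate]
      norm_num [restrictedHead, Fin.ext_iff]
    refine STVrun.elect (a := cC) (by decide) (by decide) ?_ ?_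
    · rw [hq]
      simp only [P2, tally, scaleElected, Multiset.map_add, Multiset.map_replicate,
        Multiset.sum_add, Multiset.sum_replicate]
      simp only [show restrictedHead Finset.univ [cA, cB, cC, cD] = some cA by decide,
        show restrictedHead Finset.univ [cC, cD, cA, cB] = some cC by decide,
        show restrictedHead (Finset.univ.erase cA) [cA, cB, cC, cD] = some cB by decide,
        show restrictedHead (Finset.univ.erase cA) [cC, cD, cA, cB] = some cC by decide,
        Option.some.injEq, Fin.reduceEq, ↓reduceIte]
      norm_num [restrictedHead, Fin.ext_iff]
    exact STVrun.done (by decide)
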